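/- For each n ≥ 2, the formula Wid_n^+ is valid in every frame H_m of the family (H_m)_{m∈ω}, where H_m = ⟨{a} ∪ B_m ∪ C_m, E_m⟩ with C_m = {k : k ≤ m+1}, B_m = {X ⊆ C_m : |X| = 2}, and E_m = {(a,u) : u ∈ B_m ∪ C_m} ∪ {(b,c) ∈ B_m × C_m : c ∈ b}. -/

import Mathlib

/-- A Kripke frame: a set of worlds with a binary relation. -/
structure Frame where
  World : Type
  rel : World → World → Prop

/-- `f` is a reduction (surjective p-morphism) of `F` to `G`. -/
def Reduction (F G : Frame) (f : F.World → G.World) : Prop :=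
  Function.Surjective f ∧
  (∀ w u, F.rel w u → G.rel (f w) (f u)) ∧
  (∀ w v, G.rel (f w) v → ∃ u, F.rel w u ∧ f u = v)

/-- `F` is reducible to `G`. -/
def Reducible (F G : Frame) : Prop := ∃ f, Reduction F G f

/-- The subframe of `F` generated by the point `w`. -/
def Frame.genSub (F : Frame) (w : F.World) : Frame :=
  ⟨{v // Relation.ReflTransGen F.rel w v}, fun a b => F.rel a.1 b.1⟩

/-- The worlds of the frame `H n`: the root `a` (encoded `none`), the
two-element subsets of `C n = {0, …, n+1}` (the set `B n`), and the elements of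
`C n` itself. -/
def HWorld (n : ℕ) : Type := Option (({s : Finset (Fin (n + 2)) // s.card = 2}) ⊕ Fin (n + 2))

/-- The relation of the frame `H n`: the root sees everything else, and a
two-element set `b ∈ B n` sees exactly its two elements. -/
def Hrel (n : ℕ) : HWorld n → HWorld n → Prop := fun x y =>
  match x, y with
  | none, some _ => True
  | some (Sum.inl b), some (Sum.inr c) => c ∈ b.1
  | _, _ => False

/-- The frame `H n`. -/
def HFrame (n : ℕ) : Frame := ⟨HWorld n, Hrel n⟩

/-- Modal formulas over countably many propositional variables. -/
inductive Formula where
  | var : ℕ → Formula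
  | bot : Formula
  | imp : Formula → Formula → Formula
  | box : Formula → Formula
deriving DecidableEq

namespace Formula

def neg (a : Formula) : Formula := .imp a .bot
def top : Formula := .imp .bot .bot
def and (a b : Formula) : Formula := neg (.imp a (neg b))
def or (a b : Formula) : Formula := .imp (neg a) b
def dia (a : Formula) : Formula := neg (.box (neg a))

/-- Finite conjunction of a list of formulas. -/
def bigConj (l : List Formula) : Formula := l.foldr and top

/-- Finite disjunction of a list of formulas. -/
def bigDisj (l : List Formula) : Formula := l.foldr or .bot

end Formula

/-- Kripke satisfaction of a formula at a world of `F` under valuation `V`. -/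
def Sat (F : Frame) (V : ℕ → F.World → Prop) : F.World → Formula → Prop
  | w, .var n => V n w
  | _, .bot => False
  | w, .imp a b => Sat F V w a → Sat F V w b
  | w, .box a => ∀ u, F.rel w u → Sat F V u a

/-- `φ` is valid at the point `w` of `F` (true under all valuations). -/
def SatAll (F : Frame) (w : F.World) (φ : Formula) : Prop := ∀ V, Sat F V w φ

/-- `φ` is valid in the frame `F`. -/
def Valid (F : Frame) (φ : Formula) : Prop := ∀ V w, Sat F V w φ

/-- The weak width formula `Wid_n^+`, with `q` encoded as variable `0` and
`p_i` as variable `i+1`: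
`q ∧ ◇(□¬q ∧ ⋀_{i≤n} ◇p_i) → ⋁_{0 ≤ i ≠ j ≤ n} ◇(p_i ∧ (p_j ∨ ◇p_j))`. -/
def widPlus (n : ℕ) : Formula :=
  .imp
    (.and (.var 0)
      (Formula.dia (.and (.box (Formula.neg (.var 0)))
        (Formula.bigConj ((List.finRange (n + 1)).map fun i => Formula.dia (.var (i + 1)))))))
    (Formula.bigDisj ((List.finRange (n + 1)).flatMap fun i =>
      (List.finRange (n + 1)).flatMap fun j =>
        if i = j then []
        else [Formula.dia (.and (.var (i + 1))
          (.or (.var (j + 1)) (Formula.dia (.var (j + 1)))))]))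

section Semantics

variable {F : Frame} {V : ℕ → F.World → Prop} {w : F.World} {a b : Formula}

lemma sat_and : Sat F V w (Formula.and a b) ↔ Sat F V w a ∧ Sat F V w b := by
  simp only [Formula.and, Formula.neg, Sat]
  tauto

lemma sat_or : Sat F V w (Formula.or a b) ↔ Sat F V w a ∨ Sat F V w b := by
  simp only [Formula.or, Formula.neg, Sat]
  tauto

lemma sat_dia : Sat F V w (Formula.dia a) ↔ ∃ u, F.rel w u ∧ Sat F V u a := by
  simp [Formula.dia, Formula.neg, Sat]

lemma sat_bigConj (l : List Formula) :
    Sat F V w (Formula.bigConj l) ↔ ∀ φ ∈ l, Sat F V w φ := by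
  induction l with
  | nil => simp [Formula.bigConj, Formula.top, Sat]
  | cons φ l ih => simp [Formula.bigConj, sat_and, ← ih]

lemma sat_bigDisj (l : List Formula) :
    Sat F V w (Formula.bigDisj l) ↔ ∃ φ ∈ l, Sat F V w φ := by
  induction l with
  | nil => simp [Formula.bigDisj, Sat]
  | cons φ l ih => simp [Formula.bigDisj, sat_or, ← ih]

end Semantics

/-- If every successor of `w` sees at most `n` points, all visible from `w`, then two of the
`n + 1` witnesses of the `◇p_i` must coincide, and that point witnesses a disjunct. -/
theorem sat_widPlus_of_succ_card_le {F : Frame} (V : ℕ → F.World → Prop) {w : F.World} {n : ℕ}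
    (hsucc : ∀ u, F.rel w u →
      ∃ s : Finset F.World, s.card ≤ n ∧ ∀ v, F.rel u v → v ∈ s ∧ F.rel w v) :
    Sat F V w (widPlus n) := by
  intro hant
  obtain ⟨-, hdia⟩ := sat_and.mp hant
  obtain ⟨u, hwu, hu⟩ := sat_dia.mp hdia
  have hconj := (sat_bigConj _).mp (sat_and.mp hu).2
  choose c huc hpc using fun i : Fin (n + 1) =>
    sat_dia.mp (hconj _ (List.mem_map.mpr ⟨i, by simp, rfl⟩))
  obtain ⟨s, hcard, hs⟩ := hsucc u hwu
  obtain ⟨i, -, j, -, hij, hcij⟩ := Finset.exists_ne_map_eq_of_card_lt_of_maps_to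
    (s := Finset.univ) (t := s) (by simpa using Nat.lt_succ_of_le hcard)
    (fun i _ => (hs _ (huc i)).1)
  refine (sat_bigDisj _).mpr ⟨Formula.dia (.and (.var (i + 1))
    (.or (.var (j + 1)) (Formula.dia (.var (j + 1))))), ?_, ?_⟩
  · exact List.mem_flatMap.mpr ⟨i, by simp,
      List.mem_flatMap.mpr ⟨j, by simp, by simp [hij, Fin.val_inj]⟩⟩
  · exact sat_dia.mpr ⟨c i, (hs _ (huc i)).2,
      sat_and.mpr ⟨hpc i, sat_or.mpr (Or.inl (hcij ▸ hpc j))⟩⟩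

/-- In `H m` only the root has successors with successors, and each of those is a two-element
set `b` seeing exactly its elements. -/
lemma HFrame.exists_finset_succ (m : ℕ) (w u : HWorld m) (hwu : Hrel m w u) :
    ∃ s : Finset (HWorld m), s.card ≤ 2 ∧ ∀ v, Hrel m u v → v ∈ s ∧ Hrel m w v := by
  rcases u with _ | (b | c)
  · rcases w with _ | (_ | _) <;> exact hwu.elim
  · rcases w with _ | (_ | _)
    · refine ⟨b.1.map (Function.Embedding.inr.trans Function.Embedding.some), by simp [b.2],
        fun v hv => ?_⟩
      rcases v with _ | (_ | c)
      iterate 2 exact hv.elim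
      exact ⟨Finset.mem_map_of_mem _ hv, trivial⟩
    all_goals exact hwu.elim
  · exact ⟨∅, by simp, fun v hv => by rcases v with _ | (_ | _) <;> exact hv.elim⟩

/-- For each `n ≥ 2`, the formula `Wid_n^+` is valid in every frame `H m`. -/
theorem widPlus_valid_in_hframes (n : ℕ) (hn : 2 ≤ n) (m : ℕ) :
    Valid (HFrame m) (widPlus n) := fun V w =>
  sat_widPlus_of_succ_card_le V fun u hwu =>
    let ⟨s, hcard, hs⟩ := HFrame.exists_finset_succ m w u hwu
    ⟨s, hcard.trans hn, hs⟩
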